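/- arXiv:1109.4243 — 7 statements merged into one kernel-verified Lean document; each statement's English description precedes it below -/
import Mathlib

section
/- Let m ≥ 2 and let p_j ∈ ℝ², j = 1,…,m, be pairwise distinct points. If the set {p_1,…,p_m} is invariant under the rotation of the plane around its center of mass p̄ through an angle φ with φ ∉ ℤπ, then S_xy = 0 and S_xx = S_yy. -/
/-- If the point set is invariant under a rotation around its center
of mass through an angle `φ ∉ ℤπ`, then `S_xy = 0` and `S_xx = S_yy`. -/
theorem stmt_4 (m : ℕ) (hm : 2 ≤ m) (x y : Fin m → ℝ)
    (hp : Function.Injective fun j => (x j, y j))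
    (φ : ℝ) (hφ : ∀ k : ℤ, φ ≠ k * Real.pi)
    (hsym : ∀ j : Fin m, ∃ k : Fin m,
      x k = (∑ i, x i) / m
          + Real.cos φ * (x j - (∑ i, x i) / m)
          - Real.sin φ * (y j - (∑ i, y i) / m) ∧
      y k = (∑ i, y i) / m
          + Real.sin φ * (x j - (∑ i, x i) / m)
          + Real.cos φ * (y j - (∑ i, y i) / m)) :
    (∑ j, (x j - (∑ i, x i) / m) * (y j - (∑ i, y i) / m)) = 0 ∧
    (∑ j, (x j - (∑ i, x i) / m) ^ 2) = ∑ j, (y j - (∑ i, y i) / m) ^ 2 := by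
  set c := Real.cos φ with hc
  set s := Real.sin φ with hsdef
  set X := (∑ i, x i) / m with hX
  set Y := (∑ i, y i) / m with hY
  have hcs : s ^ 2 + c ^ 2 = 1 := Real.sin_sq_add_cos_sq φ
  have hs : s ≠ 0 := by
    intro h
    rcases Real.sin_eq_zero_iff.mp h with ⟨k, hk⟩
    exact hφ k hk.symm
  choose τ hτx hτy using hsym
  have hinj : Function.Injective τ := by
    intro j j' h
    apply hp
    have h1 := hτx j; have h2 := hτx j'
    have h3 := hτy j; have h4 := hτy j'
    rw [h] at h1 h3
    have e1 : c * (x j - X) - s * (y j - Y) = c * (x j' - X) - s * (y j' - Y) := by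
      linarith
    have e2 : s * (x j - X) + c * (y j - Y) = s * (x j' - X) + c * (y j' - Y) := by
      linarith
    have ex : x j = x j' := by linear_combination c * e1 + s * e2 + (x j' - x j) * hcs
    have ey : y j = y j' := by linear_combination (-s) * e1 + c * e2 + (y j' - y j) * hcs
    simp [Prod.ext_iff, ex, ey]
  have hbij : Function.Bijective τ := Finite.injective_iff_bijective.mp hinj
  set A := ∑ j, (x j - X) ^ 2 with hA
  set B := ∑ j, (x j - X) * (y j - Y) with hB
  set C := ∑ j, (y j - Y) ^ 2 with hC
  have E1 : B = c * s * A + (c ^ 2 - s ^ 2) * B - c * s * C := by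
    calc B = ∑ j, (x (τ j) - X) * (y (τ j) - Y) :=
          (hbij.sum_comp fun k => (x k - X) * (y k - Y)).symm
      _ = ∑ j, (c * s * (x j - X) ^ 2 + (c ^ 2 - s ^ 2) * ((x j - X) * (y j - Y))
            - c * s * (y j - Y) ^ 2) := by
          refine Finset.sum_congr rfl fun j _ => ?_
          rw [hτx j, hτy j]; ring
      _ = c * s * A + (c ^ 2 - s ^ 2) * B - c * s * C := by
          rw [hA, hB, hC, Finset.sum_sub_distrib, Finset.sum_add_distrib,
            ← Finset.mul_sum, ← Finset.mul_sum, ← Finset.mul_sum]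
  have E2 : A = c ^ 2 * A - 2 * c * s * B + s ^ 2 * C := by
    calc A = ∑ j, (x (τ j) - X) ^ 2 :=
          (hbij.sum_comp fun k => (x k - X) ^ 2).symm
      _ = ∑ j, (c ^ 2 * (x j - X) ^ 2 - 2 * c * s * ((x j - X) * (y j - Y))
            + s ^ 2 * (y j - Y) ^ 2) := by
          refine Finset.sum_congr rfl fun j _ => ?_
          rw [hτx j]; ring
      _ = c ^ 2 * A - 2 * c * s * B + s ^ 2 * C := by
          rw [hA, hB, hC, Finset.sum_add_distrib, Finset.sum_sub_distrib,
            ← Finset.mul_sum, ← Finset.mul_sum, ← Finset.mul_sum]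
  have h1 : s * (A - C) + 2 * c * B = 0 := by
    have h : s * (s * (A - C) + 2 * c * B) = 0 := by
      linear_combination E2 + A * hcs
    exact (mul_eq_zero.mp h).resolve_left hs
  have h2 : c * (A - C) - 2 * s * B = 0 := by
    have h : s * (c * (A - C) - 2 * s * B) = 0 := by
      linear_combination -E1 - B * hcs
    exact (mul_eq_zero.mp h).resolve_left hs
  constructor
  · linear_combination (c * h1 - s * h2) / 2 - B * hcs
  · linear_combination s * h1 + c * h2 - (A - C) * hcs
end

section
/- Let m ≥ 2 and let p_j = (x_j, y_j) ∈ ℝ², j = 1,…,m, be points whose x-coordinates are pairwise distinct. The unique line minimizing the algebraic L²-distance (the regression line y = (S_xy/S_xx)(x − x̄) + ȳ) also minimizes the sum of squared Euclidean distances Σ_{j=1}^m dist(p_j, g)² over all lines g if and only if either all points p_1,…,p_m lie on this line, or S_xy = 0 and S_xx ≥ S_yy. -/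
set_option maxHeartbeats 1000000


/-- The regression line (minimizing the algebraic L²-distance) also
minimizes the sum of squared Euclidean distances over all lines iff all points lie
on it, or `S_xy = 0` and `S_xx ≥ S_yy`. -/
theorem stmt_5 (m : ℕ) (hm : 2 ≤ m) (x y : Fin m → ℝ)
    (hx : Function.Injective x) :
    let xbar : ℝ := (∑ j, x j) / m
    let ybar : ℝ := (∑ j, y j) / m
    let Sxx : ℝ := ∑ j, (x j - xbar) ^ 2
    let Sxy : ℝ := ∑ j, (x j - xbar) * (y j - ybar)
    let Syy : ℝ := ∑ j, (y j - ybar) ^ 2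
    let g₀ : Set (ℝ × ℝ) := {q | q.2 = Sxy / Sxx * (q.1 - xbar) + ybar}
    ((∃ c n₁ n₂ : ℝ, n₁ ^ 2 + n₂ ^ 2 = 1 ∧
        g₀ = {q : ℝ × ℝ | q.1 * n₁ + q.2 * n₂ = c} ∧
        ∀ c' n₁' n₂' : ℝ, n₁' ^ 2 + n₂' ^ 2 = 1 →
          (∑ j, (c - (x j * n₁ + y j * n₂)) ^ 2) ≤
            ∑ j, (c' - (x j * n₁' + y j * n₂')) ^ 2) ↔
      ((∀ j, (x j, y j) ∈ g₀) ∨ (Sxy = 0 ∧ Sxx ≥ Syy))) := by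
  intro xbar ybar Sxx Sxy Syy g₀
  have hSxx : Sxx = ∑ j, (x j - xbar) ^ 2 := rfl
  have hSxy : Sxy = ∑ j, (x j - xbar) * (y j - ybar) := rfl
  have hSyy : Syy = ∑ j, (y j - ybar) ^ 2 := rfl
  have hg₀ : ∀ q : ℝ × ℝ, q ∈ g₀ ↔ q.2 = Sxy / Sxx * (q.1 - xbar) + ybar :=
    fun q => Iff.rfl
  have hm0 : (m : ℝ) ≠ 0 := Nat.cast_ne_zero.mpr (by omega)
  have hsumx : ∑ j, (x j - xbar) = 0 := by
    have h1 : ∑ j, (x j - xbar) = (∑ j, x j) - m * xbar := by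
      rw [Finset.sum_sub_distrib, Finset.sum_const, Finset.card_fin, nsmul_eq_mul]
    have h2 : xbar = (∑ j, x j) / m := rfl
    rw [h1, h2]; field_simp; ring
  have hsumy : ∑ j, (y j - ybar) = 0 := by
    have h1 : ∑ j, (y j - ybar) = (∑ j, y j) - m * ybar := by
      rw [Finset.sum_sub_distrib, Finset.sum_const, Finset.card_fin, nsmul_eq_mul]
    have h2 : ybar = (∑ j, y j) / m := rfl
    rw [h1, h2]; field_simp; ring
  have hs : 0 < Sxx := by
    obtain ⟨j0, hj0⟩ : ∃ j, x j ≠ xbar := by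
      by_contra h; push_neg at h
      have h01 : (⟨0, by omega⟩ : Fin m) = ⟨1, by omega⟩ :=
        hx ((h _).trans (h _).symm)
      simp [Fin.ext_iff] at h01
    rw [hSxx]
    refine Finset.sum_pos' (fun i _ => sq_nonneg _) ⟨j0, Finset.mem_univ _, ?_⟩
    have h2 : x j0 - xbar ≠ 0 := sub_ne_zero.mpr hj0
    positivity
  have hE : 0 < Sxx ^ 2 + Sxy ^ 2 := by positivity
  set V : ℝ := Sxx * (Sxx * Syy - Sxy ^ 2) / (Sxx ^ 2 + Sxy ^ 2) with hV
  have hVE : V * (Sxx ^ 2 + Sxy ^ 2) = Sxx * (Sxx * Syy - Sxy ^ 2) := by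
    rw [hV]; field_simp
  have hF : ∀ c n₁ n₂ : ℝ, ∑ j, (c - (x j * n₁ + y j * n₂)) ^ 2
      = m * (c - (xbar * n₁ + ybar * n₂)) ^ 2
        + (n₁ ^ 2 * Sxx + 2 * (n₁ * n₂) * Sxy + n₂ ^ 2 * Syy) := by
    intro c n₁ n₂
    have hterm : ∀ j : Fin m, (c - (x j * n₁ + y j * n₂)) ^ 2
        = ((c - (xbar * n₁ + ybar * n₂)) ^ 2
          - (2 * (c - (xbar * n₁ + ybar * n₂)) * n₁) * (x j - xbar)
          - (2 * (c - (xbar * n₁ + ybar * n₂)) * n₂) * (y j - ybar))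
          + (n₁ ^ 2 * (x j - xbar) ^ 2
            + (2 * (n₁ * n₂)) * ((x j - xbar) * (y j - ybar))
            + n₂ ^ 2 * (y j - ybar) ^ 2) := fun j => by ring
    rw [Finset.sum_congr rfl fun j _ => hterm j]
    rw [Finset.sum_add_distrib, Finset.sum_add_distrib, Finset.sum_add_distrib,
        Finset.sum_sub_distrib, Finset.sum_sub_distrib,
        ← Finset.mul_sum, ← Finset.mul_sum, ← Finset.mul_sum, ← Finset.mul_sum,
        ← Finset.mul_sum, hsumx, hsumy, Finset.sum_const, Finset.card_fin,
        nsmul_eq_mul, ← hSxx, ← hSxy, ← hSyy]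
    ring
  have hQval : ∀ n₁ n₂ : ℝ, Sxx * n₁ + Sxy * n₂ = 0 → n₁ ^ 2 + n₂ ^ 2 = 1 →
      n₁ ^ 2 * Sxx + 2 * (n₁ * n₂) * Sxy + n₂ ^ 2 * Syy = V := by
    intro n₁ n₂ h1 h2
    have hQE : (n₁ ^ 2 * Sxx + 2 * (n₁ * n₂) * Sxy + n₂ ^ 2 * Syy) * (Sxx ^ 2 + Sxy ^ 2)
        = Sxx * (Sxx * Syy - Sxy ^ 2) := by
      linear_combination ((Sxx ^ 2 + 2 * Sxy ^ 2 - Sxx * Syy) * n₁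
        + Sxy * (Sxx + Syy) * n₂) * h1 + Sxx * (Sxx * Syy - Sxy ^ 2) * h2
    exact mul_right_cancel₀ (ne_of_gt hE) (hQE.trans hVE.symm)
  constructor
  · -- forward direction
    rintro ⟨c, n₁, n₂, hunit, hset, hmin⟩
    have hc1 : xbar * n₁ + ybar * n₂ = c := by
      have h1 : ((xbar, ybar) : ℝ × ℝ) ∈ g₀ := by rw [hg₀]; simp
      rw [hset] at h1; exact h1
    have hc2 : (xbar + 1) * n₁ + (Sxy / Sxx + ybar) * n₂ = c := by
      have h1 : ((xbar + 1, Sxy / Sxx + ybar) : ℝ × ℝ) ∈ g₀ := by rw [hg₀]; ring_nf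
      rw [hset] at h1; exact h1
    have h3 : n₁ = -(Sxy / Sxx) * n₂ := by linear_combination hc2 - hc1
    have hrel : Sxx * n₁ + Sxy * n₂ = 0 := by rw [h3]; field_simp; ring
    have hQ := hQval n₁ n₂ hrel hunit
    have hP : ∀ a b : ℝ, a ^ 2 + b ^ 2 = 1 →
        V ≤ a ^ 2 * Sxx + 2 * (a * b) * Sxy + b ^ 2 * Syy := by
      intro a b hab
      have h1 := hmin (xbar * a + ybar * b) a b hab
      rw [hF, hF] at h1
      have e1 : c - (xbar * n₁ + ybar * n₂) = 0 := by rw [hc1]; ring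
      rw [e1, sub_self, hQ] at h1
      simpa using h1
    by_cases ht : Sxy = 0
    · right
      refine ⟨ht, ?_⟩
      have hVu : V = Syy := by rw [hV, ht]; field_simp; ring
      have h1 := hP 1 0 (by norm_num)
      rw [hVu] at h1
      nlinarith [h1]
    · left
      have hquad : ∀ α : ℝ, 0 ≤ (Sxx - V) * (α * α) + (2 * Sxy) * α + (Syy - V) := by
        intro α
        have hr0 : (0:ℝ) < Real.sqrt (α ^ 2 + 1) := Real.sqrt_pos.mpr (by positivity)
        have hr2 : Real.sqrt (α ^ 2 + 1) ^ 2 = α ^ 2 + 1 := Real.sq_sqrt (by positivity)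
        have hu : (α / Real.sqrt (α ^ 2 + 1)) ^ 2 + (1 / Real.sqrt (α ^ 2 + 1)) ^ 2 = 1 := by
          rw [div_pow, div_pow, hr2]
          field_simp
        have h1 := hP _ _ hu
        have h2 : (α / Real.sqrt (α ^ 2 + 1)) ^ 2 * Sxx
            + 2 * ((α / Real.sqrt (α ^ 2 + 1)) * (1 / Real.sqrt (α ^ 2 + 1))) * Sxy
            + (1 / Real.sqrt (α ^ 2 + 1)) ^ 2 * Syy
            = (Sxx * α ^ 2 + 2 * Sxy * α + Syy) / (α ^ 2 + 1) := by
          rw [div_pow, div_pow, hr2, div_mul_div_comm, Real.mul_self_sqrt (by positivity)]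
          field_simp
        rw [h2, le_div_iff₀ (by positivity)] at h1
        nlinarith [h1]
      have hdisc := discrim_le_zero hquad
      simp only [discrim] at hdisc
      have h3 : 0 ≤ (Sxx - V) * (Syy - V) - Sxy ^ 2 := by nlinarith [hdisc]
      have key : ((Sxx - V) * (Syy - V) - Sxy ^ 2) * (Sxx ^ 2 + Sxy ^ 2) ^ 2
          = -(Sxy * (Sxx * Syy - Sxy ^ 2)) ^ 2 := by
        linear_combination (V * (Sxx ^ 2 + Sxy ^ 2) - (Sxx + Syy) * (Sxx ^ 2 + Sxy ^ 2)
          + Sxx * (Sxx * Syy - Sxy ^ 2)) * hVE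
      have h4 : (Sxy * (Sxx * Syy - Sxy ^ 2)) ^ 2 ≤ 0 := by nlinarith [h3, hE, key]
      have h5 : Sxy * (Sxx * Syy - Sxy ^ 2) = 0 :=
        (pow_eq_zero_iff two_ne_zero).mp (le_antisymm h4 (sq_nonneg _))
      have hD : Sxx * Syy - Sxy ^ 2 = 0 := (mul_eq_zero.mp h5).resolve_left ht
      intro j
      have hres : ∑ i, (y i - ybar - Sxy / Sxx * (x i - xbar)) ^ 2
          = Syy - 2 * (Sxy / Sxx) * Sxy + (Sxy / Sxx) ^ 2 * Sxx := by
        have ht2 : ∀ i : Fin m, (y i - ybar - Sxy / Sxx * (x i - xbar)) ^ 2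
            = ((y i - ybar) ^ 2
              - (2 * (Sxy / Sxx)) * ((x i - xbar) * (y i - ybar)))
              + (Sxy / Sxx) ^ 2 * (x i - xbar) ^ 2 := fun i => by ring
        rw [Finset.sum_congr rfl fun i _ => ht2 i, Finset.sum_add_distrib,
            Finset.sum_sub_distrib, ← Finset.mul_sum, ← Finset.mul_sum,
            ← hSxx, ← hSxy, ← hSyy]
      have hres0 : ∑ i, (y i - ybar - Sxy / Sxx * (x i - xbar)) ^ 2 = 0 := by
        rw [hres]
        have h9 : Syy - 2 * (Sxy / Sxx) * Sxy + (Sxy / Sxx) ^ 2 * Sxx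
            = (Sxx * Syy - Sxy ^ 2) / Sxx := by field_simp; ring
        rw [h9, hD, zero_div]
      have hj := (Finset.sum_eq_zero_iff_of_nonneg (fun i _ => sq_nonneg _)).mp
        hres0 j (Finset.mem_univ j)
      have hj2 : y j - ybar - Sxy / Sxx * (x j - xbar) = 0 :=
        (pow_eq_zero_iff two_ne_zero).mp hj
      show y j = Sxy / Sxx * (x j - xbar) + ybar
      linarith [hj2]
  · -- backward direction
    intro hrhs
    have hP : ∀ a b : ℝ, a ^ 2 + b ^ 2 = 1 →
        V ≤ a ^ 2 * Sxx + 2 * (a * b) * Sxy + b ^ 2 * Syy := by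
      rcases hrhs with hall | ⟨ht, hsu⟩
      · have hmem : ∀ j, y j - ybar = Sxy / Sxx * (x j - xbar) := by
          intro j
          have h : y j = Sxy / Sxx * (x j - xbar) + ybar := hall j
          linarith
        have e2 : Syy = (Sxy / Sxx) ^ 2 * Sxx := by
          calc Syy = ∑ j, (y j - ybar) ^ 2 := hSyy
            _ = ∑ j, (Sxy / Sxx) ^ 2 * (x j - xbar) ^ 2 :=
                Finset.sum_congr rfl fun j _ => by rw [hmem j]; ring
            _ = (Sxy / Sxx) ^ 2 * Sxx := by rw [← Finset.mul_sum, ← hSxx]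
        have hdet : Sxx * Syy - Sxy ^ 2 = 0 := by
          rw [e2]; field_simp; ring
        have hV0 : V = 0 := by
          have h9 : V * (Sxx ^ 2 + Sxy ^ 2) = 0 := by rw [hVE, hdet, mul_zero]
          exact (mul_eq_zero.mp h9).resolve_right (ne_of_gt hE)
        intro a b hab
        rw [hV0]
        nlinarith [sq_nonneg (Sxx * a + Sxy * b), hs, hdet, sq_nonneg b]
      · have hV0 : V = Syy := by
          rw [hV, ht]
          field_simp
          ring
        intro a b hab
        rw [hV0, ht]
        nlinarith [sq_nonneg a, hab, hsu, hs]
    set ρ : ℝ := Real.sqrt (1 + (Sxy / Sxx) ^ 2) with hρ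
    have hρpos : 0 < ρ := Real.sqrt_pos.mpr (by positivity)
    have hρ2 : ρ ^ 2 = 1 + (Sxy / Sxx) ^ 2 := Real.sq_sqrt (by positivity)
    have hunit : (-(Sxy / Sxx) / ρ) ^ 2 + (1 / ρ) ^ 2 = 1 := by
      have h1 : (-(Sxy / Sxx) / ρ) ^ 2 + (1 / ρ) ^ 2 = (1 + (Sxy / Sxx) ^ 2) / ρ ^ 2 := by
        ring
      rw [h1, hρ2, div_self (by positivity)]
    refine ⟨xbar * (-(Sxy / Sxx) / ρ) + ybar * (1 / ρ), -(Sxy / Sxx) / ρ, 1 / ρ,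
      hunit, ?_, ?_⟩
    · ext q
      show (q.2 = Sxy / Sxx * (q.1 - xbar) + ybar) ↔
        q.1 * (-(Sxy / Sxx) / ρ) + q.2 * (1 / ρ)
          = xbar * (-(Sxy / Sxx) / ρ) + ybar * (1 / ρ)
      have hkey : q.1 * (-(Sxy / Sxx) / ρ) + q.2 * (1 / ρ)
          - (xbar * (-(Sxy / Sxx) / ρ) + ybar * (1 / ρ))
          = (q.2 - (Sxy / Sxx * (q.1 - xbar) + ybar)) / ρ := by ring
      constructor
      · intro h
        rw [← sub_eq_zero, hkey, h, sub_self, zero_div]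
      · intro h
        rw [← sub_eq_zero, hkey] at h
        rcases div_eq_zero_iff.mp h with h2 | h2
        · exact sub_eq_zero.mp h2
        · exact absurd h2 hρpos.ne'
    · intro c' n₁' n₂' hu'
      rw [hF, hF, sub_self]
      have hQ : (-(Sxy / Sxx) / ρ) ^ 2 * Sxx
          + 2 * ((-(Sxy / Sxx) / ρ) * (1 / ρ)) * Sxy + (1 / ρ) ^ 2 * Syy = V := by
        apply hQval _ _ _ hunit
        field_simp
        ring
      rw [hQ]
      have h1 := hP n₁' n₂' hu'
      have h2 : 0 ≤ (m : ℝ) * (c' - (xbar * n₁' + ybar * n₂')) ^ 2 := by positivity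
      nlinarith [h1, h2]
end

section
/- Let m ≥ 2 and let p_j = (x_j, y_j) ∈ ℝ², j = 1,…,m, be points whose x-coordinates are pairwise distinct. For j ≠ k set a_{jk} = (y_j − y_k)/(x_j − x_k) and b_{jk} = (y_k x_j − y_j x_k)/(x_j − x_k), and let E = {(a_{jk}, b_{jk}) : j > k and f(a_{jk}, b_{jk}) = min_{(a,b) ∈ ℝ²} f(a,b)}, where f(a,b) = Σ_{j=1}^m |y_j − a x_j − b|. Then a pair (a,b) ∈ ℝ² minimizes f if and only if (a,b) lies in the convex hull of E. -/
open Filter Set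

private lemma abs_pair_aux (e r : ℝ) (h : |e| ≤ |r|) : |r - e| + |r + e| = 2 * |r| := by
  obtain ⟨h1, h2⟩ := abs_le.1 h
  rcases le_or_gt 0 r with hr | hr
  · rw [abs_of_nonneg hr] at h1 h2
    rw [abs_of_nonneg hr, abs_of_nonneg (by linarith), abs_of_nonneg (by linarith)]; ring
  · rw [abs_of_neg hr] at h1 h2
    rw [abs_of_neg hr, abs_of_nonpos (by linarith), abs_of_nonpos (by linarith)]; ring

/-- `(a,b)` minimizes the algebraic L¹-distance
`f(a,b) = Σ |y_j - a x_j - b|` iff `(a,b)` lies in the convex hull of the set `E`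
of parameter pairs of optimal lines through two of the given points. -/
theorem stmt_10 (m : ℕ) (hm : 2 ≤ m) (x y : Fin m → ℝ)
    (hx : Function.Injective x) :
    let f : ℝ → ℝ → ℝ := fun a b => ∑ j, |y j - a * x j - b|
    let E : Set (ℝ × ℝ) := {ab | ∃ j k : Fin m, k < j ∧
      ab = ((y j - y k) / (x j - x k), (y k * x j - y j * x k) / (x j - x k)) ∧
      ∀ a b : ℝ, f ab.1 ab.2 ≤ f a b}
    ∀ a b : ℝ, (∀ a' b' : ℝ, f a b ≤ f a' b') ↔ (a, b) ∈ convexHull ℝ E := by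
  intro f E
  set F : ℝ × ℝ → ℝ := fun p => ∑ j, |y j - p.1 * x j - p.2| with hFdef
  set M : Set (ℝ × ℝ) := {p | ∀ q : ℝ × ℝ, F p ≤ F q} with hMdef
  -- continuity
  have hFcont : Continuous F := by
    apply continuous_finset_sum
    intro j _
    exact ((continuous_const.sub (continuous_fst.mul continuous_const)).sub continuous_snd).abs
  -- convexity
  have hFconv : ConvexOn ℝ Set.univ F := by
    refine ⟨convex_univ, ?_⟩
    intro p _ q _ s t hs ht hst
    have hst' : s = 1 - t := by linarith
    subst hst'
    simp only [hFdef, smul_eq_mul, Prod.fst_add, Prod.snd_add, Prod.smul_fst, Prod.smul_snd,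
      Finset.mul_sum, ← Finset.sum_add_distrib]
    apply Finset.sum_le_sum
    intro j _
    have key : y j - ((1 - t) * p.1 + t * q.1) * x j - ((1 - t) * p.2 + t * q.2)
        = (1 - t) * (y j - p.1 * x j - p.2) + t * (y j - q.1 * x j - q.2) := by ring
    rw [key]
    calc |(1 - t) * (y j - p.1 * x j - p.2) + t * (y j - q.1 * x j - q.2)|
        ≤ |(1 - t) * (y j - p.1 * x j - p.2)| + |t * (y j - q.1 * x j - q.2)| := abs_add_le _ _
      _ = (1 - t) * |y j - p.1 * x j - p.2| + t * |y j - q.1 * x j - q.2| := by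
          rw [abs_mul, abs_mul, abs_of_nonneg hs, abs_of_nonneg ht]
  have hMconv : Convex ℝ M := by
    intro p hp q hq s t hs ht hst
    intro r
    calc F (s • p + t • q) ≤ s * F p + t * F q :=
          hFconv.2 (mem_univ p) (mem_univ q) hs ht hst
      _ ≤ s * F r + t * F r := by
          have := hp r; have := hq r
          nlinarith
      _ = F r := by rw [← add_mul, hst, one_mul]
  -- two distinguished indices
  have h0m : 0 < m := by omega
  have h1m : 1 < m := by omega
  set j0 : Fin m := ⟨0, h0m⟩
  set k0 : Fin m := ⟨1, h1m⟩
  have hj0k0 : j0 ≠ k0 := by simp [j0, k0, Fin.ext_iff]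
  have hxne : x j0 - x k0 ≠ 0 := sub_ne_zero.2 fun h => hj0k0 (hx h)
  set D : ℝ := |x j0 - x k0| with hDdef
  have hD : 0 < D := abs_pos.2 hxne
  set X : ℝ := |x j0|
  set Y1 : ℝ := |y j0 - y k0|
  set Y2 : ℝ := |y j0|
  have hX : 0 ≤ X := abs_nonneg _
  have hY1 : 0 ≤ Y1 := abs_nonneg _
  have hY2 : 0 ≤ Y2 := abs_nonneg _
  have hF0 : ∀ p, 0 ≤ F p := fun p => Finset.sum_nonneg fun j _ => abs_nonneg _
  -- term bounds
  have hterm : ∀ (p : ℝ × ℝ) (j : Fin m), |y j - p.1 * x j - p.2| ≤ F p := by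
    intro p j
    exact Finset.single_le_sum (f := fun i => |y i - p.1 * x i - p.2|)
      (fun i _ => abs_nonneg _) (Finset.mem_univ j)
  have hterm2 : ∀ p : ℝ × ℝ,
      |y j0 - p.1 * x j0 - p.2| + |y k0 - p.1 * x k0 - p.2| ≤ F p := by
    intro p
    have : ∑ j ∈ ({j0, k0} : Finset (Fin m)), |y j - p.1 * x j - p.2| ≤ F p := by
      apply Finset.sum_le_sum_of_subset_of_nonneg (Finset.subset_univ _)
      intro i _ _; exact abs_nonneg _
    rwa [Finset.sum_pair hj0k0] at this
  -- coercivity bound:  ‖p‖ * D ≤ K' * F p + C'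
  set K' : ℝ := D + X + 1 with hK'def
  set C' : ℝ := Y1 * (X + 1) + Y2 * D with hC'def
  have hK' : 0 < K' := by positivity
  have hbound : ∀ p : ℝ × ℝ, ‖p‖ * D ≤ K' * F p + C' := by
    intro p
    obtain ⟨a, b⟩ := p
    have h2 := hterm2 (a, b)
    have h1 := hterm (a, b) j0
    simp only at h1 h2
    have hra : |a| * D ≤ Y1 + F (a, b) := by
      have : a * (x j0 - x k0) = (y j0 - y k0) - ((y j0 - a * x j0 - b) - (y k0 - a * x k0 - b)) := by
        ring
      calc |a| * D = |a * (x j0 - x k0)| := (abs_mul _ _).symm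
        _ = |(y j0 - y k0) - ((y j0 - a * x j0 - b) - (y k0 - a * x k0 - b))| := by rw [this]
        _ ≤ |y j0 - y k0| + (|y j0 - a * x j0 - b| + |y k0 - a * x k0 - b|) := by
            have := abs_sub (y j0 - y k0) ((y j0 - a * x j0 - b) - (y k0 - a * x k0 - b))
            have := abs_sub (y j0 - a * x j0 - b) (y k0 - a * x k0 - b)
            calc |(y j0 - y k0) - ((y j0 - a * x j0 - b) - (y k0 - a * x k0 - b))|
                ≤ |y j0 - y k0| + |(y j0 - a * x j0 - b) - (y k0 - a * x k0 - b)| :=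
                  abs_sub _ _
              _ ≤ _ := by
                  have := abs_sub (y j0 - a * x j0 - b) (y k0 - a * x k0 - b)
                  linarith
        _ ≤ Y1 + F (a, b) := by linarith
    have hrb : |b| ≤ Y2 + |a| * X + F (a, b) := by
      have hb : b = y j0 - a * x j0 - (y j0 - a * x j0 - b) := by ring
      calc |b| = |y j0 - a * x j0 - (y j0 - a * x j0 - b)| := by rw [← hb]
        _ ≤ |y j0 - a * x j0| + |y j0 - a * x j0 - b| := abs_sub _ _
        _ ≤ (|y j0| + |a * x j0|) + |y j0 - a * x j0 - b| := by
            have := abs_sub (y j0) (a * x j0); linarith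
        _ ≤ Y2 + |a| * X + F (a, b) := by
            rw [abs_mul]; simp only [X, Y2]; linarith
    have hnorm : ‖((a, b) : ℝ × ℝ)‖ ≤ |a| + |b| := by
      rw [Prod.norm_def]
      simp only [Real.norm_eq_abs]
      exact max_le (by linarith [abs_nonneg b]) (by linarith [abs_nonneg a])
    have hFp := hF0 (a, b)
    nlinarith [mul_nonneg (abs_nonneg a) hX, mul_le_mul_of_nonneg_right hnorm hD.le,
      mul_le_mul_of_nonneg_right hrb hD.le, mul_le_mul_of_nonneg_right hra hX]
  -- coercivity
  have hcoer : Tendsto F (cocompact (ℝ × ℝ)) atTop := by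
    have h1 : Tendsto (fun p : ℝ × ℝ => (‖p‖ * D - C') / K') (cocompact (ℝ × ℝ)) atTop := by
      apply Tendsto.atTop_div_const hK'
      apply tendsto_atTop_add_const_right
      exact tendsto_norm_cocompact_atTop.atTop_mul_const hD
    apply tendsto_atTop_mono _ h1
    intro p
    rw [div_le_iff₀ hK']
    nlinarith [hbound p]
  -- existence of minimizer
  obtain ⟨p0, hp0⟩ : ∃ p0 : ℝ × ℝ, ∀ q, F p0 ≤ F q := hFcont.exists_forall_le hcoer
  have hMne : p0 ∈ M := hp0
  -- M compact
  have hMclosed : IsClosed M := by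
    have : M = ⋂ q : ℝ × ℝ, {p | F p ≤ F q} := by
      ext p; simp [hMdef, Set.mem_iInter]
    rw [this]
    exact isClosed_iInter fun q => isClosed_le hFcont continuous_const
  have hMbdd : Bornology.IsBounded M := by
    apply (Metric.isBounded_closedBall (x := (0 : ℝ × ℝ)) (r := (K' * F p0 + C') / D)).subset
    intro p hp
    rw [Metric.mem_closedBall, dist_zero_right]
    rw [le_div_iff₀ hD]
    have h1 : F p ≤ F p0 := hp p0
    nlinarith [hbound p]
  have hMcpt : IsCompact M := Metric.isCompact_of_isClosed_isBounded hMclosed hMbdd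
  -- E ⊆ M
  have hEM : E ⊆ M := by
    rintro p ⟨j, k, hjk, hpe, hopt⟩
    intro q
    exact hopt q.1 q.2
  -- E finite
  have hEfin : E.Finite := by
    apply Set.Finite.subset (Set.finite_range (fun jk : Fin m × Fin m =>
      (((y jk.1 - y jk.2) / (x jk.1 - x jk.2)),
        ((y jk.2 * x jk.1 - y jk.1 * x jk.2) / (x jk.1 - x jk.2)))))
    rintro p ⟨j, k, _, hpe, _⟩
    exact ⟨(j, k), hpe.symm⟩
  -- extreme points of M lie in E
  have hext : M.extremePoints ℝ ⊆ E := by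
    intro p hp
    obtain ⟨hpM, hpext⟩ := hp
    have hzz : ∃ j k : Fin m, j ≠ k ∧ y j - p.1 * x j - p.2 = 0 ∧ y k - p.1 * x k - p.2 = 0 := by
      by_contra hcon
      push_neg at hcon
      obtain ⟨d, hd0, hdz⟩ : ∃ d : ℝ × ℝ, d ≠ 0 ∧
          ∀ j, y j - p.1 * x j - p.2 = 0 → d.1 * x j + d.2 = 0 := by
        by_cases hz : ∃ j, y j - p.1 * x j - p.2 = 0
        · obtain ⟨jz, hjz⟩ := hz
          refine ⟨(1, -x jz), by simp [Prod.ext_iff], fun j hj => ?_⟩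
          have hjjz : j = jz := by
            by_contra hne
            exact hcon j jz hne hj hjz
          subst hjjz; simp
        · push_neg at hz
          exact ⟨(0, 1), by simp [Prod.ext_iff], fun j hj => absurd hj (hz j)⟩
      set r : Fin m → ℝ := fun j => y j - p.1 * x j - p.2 with hrdef
      set c : Fin m → ℝ := fun j => d.1 * x j + d.2 with hcdef
      have hune : (Finset.univ : Finset (Fin m)).Nonempty := ⟨j0, Finset.mem_univ _⟩
      set ε : ℝ := Finset.univ.inf' hune (fun j => if r j = 0 then 1 else |r j| / (|c j| + 1))
        with hεdef
      have hε : 0 < ε := by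
        rw [hεdef, Finset.lt_inf'_iff]
        intro j _
        split_ifs with h
        · norm_num
        · exact div_pos (abs_pos.2 h) (by positivity)
      have hεle : ∀ j, ε * |c j| ≤ |r j| := by
        intro j
        by_cases h : r j = 0
        · have hc0 : c j = 0 := hdz j h
          simp [h, hc0]
        · have h1 : ε ≤ |r j| / (|c j| + 1) := by
            have := Finset.inf'_le (b := j)
              (fun j => if r j = 0 then 1 else |r j| / (|c j| + 1)) (Finset.mem_univ j)
            rwa [if_neg h] at this
          have hc : (0 : ℝ) < |c j| + 1 := by positivity
          calc ε * |c j| ≤ (|r j| / (|c j| + 1)) * |c j| :=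
                mul_le_mul_of_nonneg_right h1 (abs_nonneg _)
            _ ≤ |r j| := by
                rw [div_mul_eq_mul_div, div_le_iff₀ hc]
                nlinarith [abs_nonneg (c j), abs_nonneg (r j)]
      have hkey : F (p + ε • d) + F (p - ε • d) = 2 * F p := by
        rw [hFdef]
        simp only
        rw [← Finset.sum_add_distrib, Finset.mul_sum]
        apply Finset.sum_congr rfl
        intro j _
        have e1 : y j - (p + ε • d).1 * x j - (p + ε • d).2 = r j - ε * c j := by
          simp only [Prod.fst_add, Prod.snd_add, Prod.smul_fst, Prod.smul_snd, smul_eq_mul,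
            hrdef, hcdef]
          ring
        have e2 : y j - (p - ε • d).1 * x j - (p - ε • d).2 = r j + ε * c j := by
          simp only [Prod.fst_sub, Prod.snd_sub, Prod.smul_fst, Prod.smul_snd, smul_eq_mul,
            hrdef, hcdef]
          ring
        rw [e1, e2]
        apply abs_pair_aux
        rw [abs_mul, abs_of_nonneg hε.le]
        exact hεle j
      have hge1 := hpM (p + ε • d)
      have hge2 := hpM (p - ε • d)
      have h1 : F (p + ε • d) = F p := by linarith
      have h2 : F (p - ε • d) = F p := by linarith
      have hp1 : p + ε • d ∈ M := by
        intro q; rw [h1]; exact hpM q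
      have hp2 : p - ε • d ∈ M := by
        intro q; rw [h2]; exact hpM q
      have hseg : p ∈ openSegment ℝ (p - ε • d) (p + ε • d) := by
        refine ⟨1/2, 1/2, by norm_num, by norm_num, by norm_num, ?_⟩
        module
      have := hpext hp1 hp2 (by rwa [openSegment_symm])
      have hεd : ε • d = 0 := by
        have : p + ε • d = p := this
        simpa using this
      exact hd0 ((smul_eq_zero.1 hεd).resolve_left (ne_of_gt hε))
    obtain ⟨j, k, hjk, hj, hk⟩ := hzz
    have hform : ∀ J K : Fin m, K < J → y J - p.1 * x J - p.2 = 0 →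
        y K - p.1 * x K - p.2 = 0 → p ∈ E := by
      intro J K hlt hJ hK
      have hxJK : x J - x K ≠ 0 := sub_ne_zero.2 fun h => (ne_of_gt hlt) (hx h)
      refine ⟨J, K, hlt, ?_, fun a' b' => hpM (a', b')⟩
      have h1 : p.1 = (y J - y K) / (x J - x K) := by
        rw [eq_div_iff hxJK]
        linear_combination hK - hJ
      have h2 : p.2 = (y K * x J - y J * x K) / (x J - x K) := by
        rw [eq_div_iff hxJK]
        linear_combination x K * hJ - x J * hK
      rw [Prod.ext_iff]
      exact ⟨h1, h2⟩
    rcases lt_or_gt_of_ne hjk with h | h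
    · exact hform k j h hk hj
    · exact hform j k h hj hk
  -- M = convexHull ℝ E
  have hKM : closure (convexHull ℝ (M.extremePoints ℝ)) = M :=
    closure_convexHull_extremePoints hMcpt hMconv
  have hEclosed : IsClosed (convexHull ℝ E) := (hEfin.isCompact_convexHull (𝕜 := ℝ)).isClosed
  have hsub1 : convexHull ℝ E ⊆ M := convexHull_min hEM hMconv
  have hsub2 : M ⊆ convexHull ℝ E := by
    calc M = closure (convexHull ℝ (M.extremePoints ℝ)) := hKM.symm
      _ ⊆ closure (convexHull ℝ E) := closure_mono (convexHull_mono hext)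
      _ = convexHull ℝ E := hEclosed.closure_eq
  have hME : M = convexHull ℝ E := Set.Subset.antisymm hsub2 hsub1
  intro a b
  constructor
  · intro hmin
    rw [← hME]
    intro q
    exact hmin q.1 q.2
  · intro hmem a' b'
    have hab : (a, b) ∈ M := hME ▸ hmem
    exact hab (a', b')
end

section
/- Let p_1 = (x_1,y_1), p_2 = (x_2,y_2), p_3 = (x_3,y_3) ∈ ℝ² with x_1 < x_2 < x_3, and suppose the three points are not collinear, i.e. (y_2 − y_1)/(x_2 − x_1) ≠ (y_3 − y_1)/(x_3 − x_1). Then the function f(a,b) = Σ_{j=1}^3 |y_j − a x_j − b| has a unique global minimizer (a,b) ∈ ℝ², namely the parameters of the line through p_1 and p_3: a = (y_3 − y_1)/(x_3 − x_1), b = y_1 − a x_1. -/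
/-- For three non-collinear points with `x₁ < x₂ < x₃`, the function
`f(a,b) = Σ_{j=1}^3 |y_j - a x_j - b|` has the parameters of the line through
`p₁` and `p₃` as its unique global minimizer. -/
theorem stmt_11 (x₁ x₂ x₃ y₁ y₂ y₃ : ℝ) (h12 : x₁ < x₂) (h23 : x₂ < x₃)
    (hnc : (y₂ - y₁) / (x₂ - x₁) ≠ (y₃ - y₁) / (x₃ - x₁)) :
    let f : ℝ → ℝ → ℝ := fun a b =>
      |y₁ - a * x₁ - b| + |y₂ - a * x₂ - b| + |y₃ - a * x₃ - b|
    let a₀ : ℝ := (y₃ - y₁) / (x₃ - x₁)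
    let b₀ : ℝ := y₁ - a₀ * x₁
    (∀ a b : ℝ, f a₀ b₀ ≤ f a b) ∧
    ∀ a b : ℝ, (∀ a' b' : ℝ, f a b ≤ f a' b') → a = a₀ ∧ b = b₀ := by
  intro f a₀ b₀
  have hx13 : x₁ < x₃ := h12.trans h23
  have hc : (0:ℝ) < x₃ - x₁ := by linarith
  have hc1 : (0:ℝ) < x₃ - x₂ := by linarith
  have hc3 : (0:ℝ) < x₂ - x₁ := by linarith
  set D : ℝ := (x₃ - x₁) * y₂ - (x₃ - x₂) * y₁ - (x₂ - x₁) * y₃ with hD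
  have hr1 : y₁ - a₀ * x₁ - b₀ = 0 := by simp only [b₀]; ring
  have hr3 : y₃ - a₀ * x₃ - b₀ = 0 := by
    simp only [b₀, a₀]
    field_simp
    ring
  have hval : (x₃ - x₁) * f a₀ b₀ = |D| := by
    have h2 : (x₃ - x₁) * (y₂ - a₀ * x₂ - b₀) = D := by
      simp only [b₀, a₀, hD]
      field_simp
      ring
    simp only [f, hr1, hr3, abs_zero, add_zero, zero_add]
    rw [← abs_of_pos hc, ← abs_mul, h2]
  have key : ∀ a b : ℝ, |D| + (x₂ - x₁) * |y₁ - a * x₁ - b|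
      + (x₃ - x₂) * |y₃ - a * x₃ - b| ≤ (x₃ - x₁) * f a b := by
    intro a b
    set r1 := y₁ - a * x₁ - b with hr1d
    set r2 := y₂ - a * x₂ - b with hr2d
    set r3 := y₃ - a * x₃ - b with hr3d
    have hD2 : D = (x₃ - x₁) * r2 - ((x₃ - x₂) * r1 + (x₂ - x₁) * r3) := by
      simp only [hr1d, hr2d, hr3d, hD]; ring
    have h1 : |D| ≤ (x₃ - x₁) * |r2| + ((x₃ - x₂) * |r1| + (x₂ - x₁) * |r3|) := by
      rw [hD2]
      calc |(x₃ - x₁) * r2 - ((x₃ - x₂) * r1 + (x₂ - x₁) * r3)|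
          ≤ |(x₃ - x₁) * r2| + |(x₃ - x₂) * r1 + (x₂ - x₁) * r3| := abs_sub _ _
        _ ≤ |(x₃ - x₁) * r2| + (|(x₃ - x₂) * r1| + |(x₂ - x₁) * r3|) := by
            gcongr; exact abs_add_le _ _
        _ = (x₃ - x₁) * |r2| + ((x₃ - x₂) * |r1| + (x₂ - x₁) * |r3|) := by
            rw [abs_mul, abs_mul, abs_mul, abs_of_pos hc, abs_of_pos hc1, abs_of_pos hc3]
    have expand : (x₃ - x₁) * f a b
        = ((x₃ - x₁) * |r2| + ((x₃ - x₂) * |r1| + (x₂ - x₁) * |r3|))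
          + ((x₂ - x₁) * |r1| + (x₃ - x₂) * |r3|) := by
      simp only [f]; ring
    linarith
  have hDne : D ≠ 0 := by
    intro h
    apply hnc
    rw [div_eq_div_iff (by linarith) (by linarith)]
    nlinarith [h]
  constructor
  · intro a b
    have h := key a b
    have h1 : (0:ℝ) ≤ (x₂ - x₁) * |y₁ - a * x₁ - b| :=
      mul_nonneg hc3.le (abs_nonneg _)
    have h2 : (0:ℝ) ≤ (x₃ - x₂) * |y₃ - a * x₃ - b| :=
      mul_nonneg hc1.le (abs_nonneg _)
    have : (x₃ - x₁) * f a₀ b₀ ≤ (x₃ - x₁) * f a b := by rw [hval]; linarith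
    exact le_of_mul_le_mul_left this hc
  · intro a b hmin
    have hle : f a b ≤ f a₀ b₀ := hmin a₀ b₀
    have h := key a b
    have hmul : (x₃ - x₁) * f a b ≤ |D| := by
      rw [← hval]; exact mul_le_mul_of_nonneg_left hle hc.le
    have h1 : (0:ℝ) ≤ (x₂ - x₁) * |y₁ - a * x₁ - b| :=
      mul_nonneg hc3.le (abs_nonneg _)
    have h2 : (0:ℝ) ≤ (x₃ - x₂) * |y₃ - a * x₃ - b| :=
      mul_nonneg hc1.le (abs_nonneg _)
    have e1 : (x₂ - x₁) * |y₁ - a * x₁ - b| = 0 := by linarith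
    have e2 : (x₃ - x₂) * |y₃ - a * x₃ - b| = 0 := by linarith
    have z1 : y₁ - a * x₁ - b = 0 := by
      have := (mul_eq_zero.mp e1).resolve_left (by positivity)
      exact abs_eq_zero.mp this
    have z3 : y₃ - a * x₃ - b = 0 := by
      have := (mul_eq_zero.mp e2).resolve_left (by positivity)
      exact abs_eq_zero.mp this
    have ha : a = a₀ := by
      simp only [a₀]
      rw [eq_div_iff (by linarith)]
      linarith [z1, z3]
    constructor
    · exact ha
    · simp only [b₀, ← ha]; linarith
end

section
/- Let m ≥ 2 and let p_j ∈ ℝ², j = 1,…,m, be pairwise distinct points. Then there exist c ∈ ℝ, n ∈ S¹ and indices j ≠ k such that (c, n) minimizes f(c', n') = Σ_{i=1}^m |c' − ⟨p_i, n'⟩| over ℝ × S¹ and the corresponding optimal line {q ∈ ℝ² : ⟨q, n⟩ = c} contains both points p_j and p_k; that is, among all lines with minimal geometric L¹-distance to the point set there is one passing through two of the given points. -/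
open Finset

/-- The L¹ objective in the offset variable is minimized at one of the data values. -/
lemma median_step {m : ℕ} (hm : 0 < m) (a : Fin m → ℝ) (c : ℝ) :
    ∃ j, (∑ i, |a j - a i|) ≤ ∑ i, |c - a i| := by
  haveI : Nonempty (Fin m) := ⟨⟨0, hm⟩⟩
  by_cases hA : ∃ i, a i ≤ c
  · by_cases hB : ∃ i, c < a i
    · obtain ⟨i₀, hi₀⟩ := hA
      obtain ⟨i₁, hi₁⟩ := hB
      obtain ⟨jL, hjLA, hjLmax⟩ := (univ.filter (fun i => a i ≤ c)).exists_max_image a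
        ⟨i₀, by simp [hi₀]⟩
      obtain ⟨jR, hjRB, hjRmin⟩ := (univ.filter (fun i => c < a i)).exists_min_image a
        ⟨i₁, by simp [hi₁]⟩
      set L := a jL with hL
      set R := a jR with hR
      have hLc : L ≤ c := (mem_filter.mp hjLA).2
      have hcR : c < R := (mem_filter.mp hjRB).2
      have key : ∀ i, (R - L) * |c - a i| = (R - c) * |L - a i| + (c - L) * |R - a i| := by
        intro i
        rcases le_or_gt (a i) c with h | h
        · have h1 : a i ≤ L := hjLmax i (by simp [h])
          rw [abs_of_nonneg (by linarith), abs_of_nonneg (by linarith),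
            abs_of_nonneg (by linarith)]
          ring
        · have h1 : R ≤ a i := hjRmin i (by simp [h])
          rw [abs_of_nonpos (by linarith), abs_of_nonpos (by linarith),
            abs_of_nonpos (by linarith)]
          ring
      have hsum : (R - L) * (∑ i, |c - a i|) =
          (R - c) * (∑ i, |L - a i|) + (c - L) * (∑ i, |R - a i|) := by
        rw [mul_sum, mul_sum, mul_sum, ← sum_add_distrib]
        exact sum_congr rfl fun i _ => key i
      rcases le_total (∑ i, |L - a i|) (∑ i, |R - a i|) with h | h
      · refine ⟨jL, ?_⟩
        nlinarith [hsum, h, hLc, hcR]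
      · refine ⟨jR, ?_⟩
        nlinarith [hsum, h, hLc, hcR]
    · push_neg at hB
      obtain ⟨j, _, hjmax⟩ := (univ : Finset (Fin m)).exists_max_image a univ_nonempty
      refine ⟨j, sum_le_sum fun i _ => ?_⟩
      have h1 : a i ≤ a j := hjmax i (mem_univ i)
      have h2 : a j ≤ c := hB j
      rw [abs_of_nonneg (by linarith), abs_of_nonneg (by linarith)]
      linarith
  · push_neg at hA
    obtain ⟨j, _, hjmin⟩ := (univ : Finset (Fin m)).exists_min_image a univ_nonempty
    refine ⟨j, sum_le_sum fun i _ => ?_⟩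
    have h1 : a j ≤ a i := hjmin i (mem_univ i)
    have h2 : c < a j := hA j
    rw [abs_of_nonpos (by linarith), abs_of_nonpos (by linarith)]
    linarith
open Finset

/-- Core piecewise-linear fact: rotating towards the nearest sign change does not
increase the objective. -/
lemma core_step {m : ℕ} (x y : Fin m → ℝ) (hy : ∀ i, 0 ≤ y i)
    (hxy : ∀ i, y i = 0 → x i = 0) (hX : 0 ≤ ∑ i, x i) (hne : ∃ k, x k ≠ 0) :
    ∃ (t : ℝ) (i₀ : Fin m), t * x i₀ + y i₀ = 0 ∧ x i₀ ≠ 0 ∧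
      (∑ i, |t * x i + y i|) ≤ ∑ i, y i := by
  have hpos : ∃ k, 0 < x k := by
    by_contra h
    push_neg at h
    obtain ⟨k, hk⟩ := hne
    have h0 : ∑ i, x i = 0 := le_antisymm (sum_nonpos fun i _ => h i) hX
    have := (sum_eq_zero_iff_of_nonpos (fun i _ => h i)).mp h0 k (mem_univ k)
    exact hk this
  obtain ⟨k, hk⟩ := hpos
  obtain ⟨i₀, hi₀S, hi₀max⟩ := (univ.filter (fun i => 0 < x i)).exists_max_image
    (fun i => -y i / x i) ⟨k, by simp [hk]⟩
  have hxi₀ : 0 < x i₀ := (mem_filter.mp hi₀S).2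
  set T := -y i₀ / x i₀ with hT
  have hyi₀ : 0 < y i₀ := by
    rcases lt_or_eq_of_le (hy i₀) with h | h
    · exact h
    · exact absurd (hxy i₀ h.symm) (ne_of_gt hxi₀)
  have hT0 : T ≤ 0 := div_nonpos_iff.mpr (Or.inr ⟨by linarith, hxi₀.le⟩)
  have hroot : T * x i₀ + y i₀ = 0 := by
    rw [hT, div_mul_cancel₀ _ hxi₀.ne']
    ring
  have hnn : ∀ i, 0 ≤ T * x i + y i := by
    intro i
    rcases lt_or_ge 0 (x i) with h | h
    · have h1 : -y i / x i ≤ T := hi₀max i (by simp [h])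
      have h2 : -y i ≤ T * x i := by
        rw [div_le_iff₀ h] at h1
        linarith
      linarith
    · have h2 : 0 ≤ T * x i := mul_nonneg_of_nonpos_of_nonpos hT0 h
      linarith [hy i]
  have hsum : (∑ i, |T * x i + y i|) = T * (∑ i, x i) + ∑ i, y i := by
    rw [mul_sum, ← sum_add_distrib]
    exact sum_congr rfl fun i _ => abs_of_nonneg (hnn i)
  refine ⟨T, i₀, hroot, ne_of_gt hxi₀, ?_⟩
  rw [hsum]
  nlinarith [mul_nonpos_of_nonpos_of_nonneg hT0 hX]

/-- A unit vector orthogonal to a nonzero vector `d` agrees up to sign with the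
canonical unit normal, so absolute values of dot products coincide. -/
lemma perp_abs (d₁ d₂ u₁ u₂ : ℝ) (hd : d₁ ^ 2 + d₂ ^ 2 ≠ 0) (hu : u₁ ^ 2 + u₂ ^ 2 = 1)
    (hperp : d₁ * u₁ + d₂ * u₂ = 0) (w₁ w₂ : ℝ) :
    |w₁ * u₁ + w₂ * u₂| =
      |w₁ * (-d₂ / Real.sqrt (d₁ ^ 2 + d₂ ^ 2)) + w₂ * (d₁ / Real.sqrt (d₁ ^ 2 + d₂ ^ 2))| := by
  have hdd : 0 < d₁ ^ 2 + d₂ ^ 2 := lt_of_le_of_ne (by positivity) (Ne.symm hd)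
  set ℓ := Real.sqrt (d₁ ^ 2 + d₂ ^ 2) with hℓdef
  have hℓ : 0 < ℓ := Real.sqrt_pos.mpr hdd
  have hℓ2 : ℓ ^ 2 = d₁ ^ 2 + d₂ ^ 2 := Real.sq_sqrt hdd.le
  set lam := (u₂ * d₁ - u₁ * d₂) / (d₁ ^ 2 + d₂ ^ 2) with hlam
  have h1 : u₁ = lam * (-d₂) := by
    rw [hlam]
    field_simp
    linear_combination d₁ * hperp
  have h2 : u₂ = lam * d₁ := by
    rw [hlam]
    field_simp
    linear_combination d₂ * hperp
  have h3 : (lam * ℓ) ^ 2 = 1 := by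
    have : lam ^ 2 * (d₁ ^ 2 + d₂ ^ 2) = 1 := by
      rw [h1, h2] at hu
      linear_combination hu
    calc (lam * ℓ) ^ 2 = lam ^ 2 * ℓ ^ 2 := by ring
    _ = lam ^ 2 * (d₁ ^ 2 + d₂ ^ 2) := by rw [hℓ2]
    _ = 1 := this
  have h4 : |lam * ℓ| = 1 := by
    rw [← Real.sqrt_sq_eq_abs, h3, Real.sqrt_one]
  calc |w₁ * u₁ + w₂ * u₂|
      = |lam * ℓ| * |w₁ * (-d₂ / ℓ) + w₂ * (d₁ / ℓ)| := by
        rw [← abs_mul]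
        congr 1
        rw [h1, h2]
        field_simp
    _ = |w₁ * (-d₂ / ℓ) + w₂ * (d₁ / ℓ)| := by rw [h4, one_mul]
/-- Rotating an optimal line around a point it contains, some line through a second
point does at least as well. -/
lemma rotate_step {m : ℕ} (hm : 2 ≤ m) (p : Fin m → ℝ × ℝ)
    (j : Fin m) (n₁ n₂ : ℝ) (hn : n₁ ^ 2 + n₂ ^ 2 = 1) :
    ∃ (u₁ u₂ : ℝ) (k : Fin m), u₁ ^ 2 + u₂ ^ 2 = 1 ∧ k ≠ j ∧
      ((p k).1 * u₁ + (p k).2 * u₂ = (p j).1 * u₁ + (p j).2 * u₂) ∧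
      (∑ i, |((p j).1 * u₁ + (p j).2 * u₂) - ((p i).1 * u₁ + (p i).2 * u₂)|) ≤
        ∑ i, |((p j).1 * n₁ + (p j).2 * n₂) - ((p i).1 * n₁ + (p i).2 * n₂)| := by
  classical
  set v₁ : Fin m → ℝ := fun i => (p j).1 - (p i).1 with hv₁
  set v₂ : Fin m → ℝ := fun i => (p j).2 - (p i).2 with hv₂
  by_cases h0 : ∃ k, k ≠ j ∧ v₁ k * n₁ + v₂ k * n₂ = 0
  · obtain ⟨k, hkj, hk⟩ := h0
    refine ⟨n₁, n₂, k, hn, hkj, ?_, le_refl _⟩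
    simp only [hv₁, hv₂] at hk
    nlinarith [hk]
  push_neg at h0
  set σ : Fin m → ℝ := fun i => if 0 ≤ v₁ i * n₁ + v₂ i * n₂ then 1 else -1 with hσ
  have hσabs : ∀ i, |σ i| = 1 := by
    intro i
    simp only [hσ]
    split_ifs <;> simp
  obtain ⟨w₁, w₂, hw_unit, hw_perp, hXw⟩ :
      ∃ w₁ w₂ : ℝ, w₁ ^ 2 + w₂ ^ 2 = 1 ∧ n₁ * w₁ + n₂ * w₂ = 0 ∧
        0 ≤ ∑ i, σ i * (v₁ i * w₁ + v₂ i * w₂) := by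
    rcases le_total 0 (∑ i, σ i * (v₁ i * (-n₂) + v₂ i * n₁)) with hX | hX
    · exact ⟨-n₂, n₁, by linear_combination hn, by ring, hX⟩
    · refine ⟨n₂, -n₁, by linear_combination hn, by ring, ?_⟩
      have hflip : (∑ i, σ i * (v₁ i * n₂ + v₂ i * (-n₁)))
          = -(∑ i, σ i * (v₁ i * (-n₂) + v₂ i * n₁)) := by
        rw [← Finset.sum_neg_distrib]
        exact Finset.sum_congr rfl fun i _ => by ring
      rw [hflip]
      linarith
  set x : Fin m → ℝ := fun i => σ i * (v₁ i * w₁ + v₂ i * w₂) with hx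
  set y : Fin m → ℝ := fun i => σ i * (v₁ i * n₁ + v₂ i * n₂) with hy
  have hy0 : ∀ i, 0 ≤ y i := by
    intro i
    simp only [hy, hσ]
    split_ifs with h
    · linarith
    · push_neg at h
      nlinarith
  have hy_abs : ∀ i, y i = |v₁ i * n₁ + v₂ i * n₂| := by
    intro i
    simp only [hy, hσ]
    split_ifs with h
    · rw [abs_of_nonneg h]; ring
    · rw [abs_of_neg (lt_of_not_ge h)]; ring
  have hvj : v₁ j = 0 ∧ v₂ j = 0 := by constructor <;> simp [hv₁, hv₂]
  have hxy : ∀ i, y i = 0 → x i = 0 := by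
    intro i hyi
    have hσne : σ i ≠ 0 := by
      intro h
      have := hσabs i
      rw [h] at this
      simp at this
    have hvn : v₁ i * n₁ + v₂ i * n₂ = 0 := by
      simp only [hy] at hyi
      rcases mul_eq_zero.mp hyi with h | h
      · exact absurd h hσne
      · exact h
    have hij : i = j := by
      by_contra hij
      exact h0 i hij hvn
    simp [hx, hij, hvj.1, hvj.2]
  -- the RHS sum equals ∑ y
  have hRHS : (∑ i, |((p j).1 * n₁ + (p j).2 * n₂) - ((p i).1 * n₁ + (p i).2 * n₂)|)
      = ∑ i, y i := by
    refine Finset.sum_congr rfl fun i _ => ?_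
    rw [hy_abs i]
    congr 1
    simp only [hv₁, hv₂]
    ring
  by_cases hne : ∃ k, x k ≠ 0
  · obtain ⟨t, i₀, hroot, hxi₀, hle⟩ := core_step x y hy0 hxy hXw hne
    have hi₀j : i₀ ≠ j := by
      intro h
      apply hxi₀
      simp [hx, h, hvj.1, hvj.2]
    set s := Real.sqrt (1 + t ^ 2) with hs
    have hs0 : 0 < s := Real.sqrt_pos.mpr (by positivity)
    have hs2 : s ^ 2 = 1 + t ^ 2 := Real.sq_sqrt (by positivity)
    have hs1 : 1 ≤ s := by nlinarith
    refine ⟨(t * w₁ + n₁) / s, (t * w₂ + n₂) / s, i₀, ?_, hi₀j, ?_, ?_⟩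
    · field_simp
      linear_combination t ^ 2 * hw_unit + 2 * t * hw_perp + hn - hs2
    · -- p i₀ · u = p j · u, i.e. v i₀ · u = 0
      have hσne : σ i₀ ≠ 0 := by
        intro h
        have := hσabs i₀
        rw [h] at this
        simp at this
      have h1 : σ i₀ * (v₁ i₀ * (t * w₁ + n₁) + v₂ i₀ * (t * w₂ + n₂)) = 0 := by
        simp only [hx, hy] at hroot
        linear_combination hroot
      have h2 : v₁ i₀ * (t * w₁ + n₁) + v₂ i₀ * (t * w₂ + n₂) = 0 := by
        rcases mul_eq_zero.mp h1 with h | h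
        · exact absurd h hσne
        · exact h
      simp only [hv₁, hv₂] at h2
      field_simp
      linarith [h2]
    · -- sum inequality
      have hterm : ∀ i, |((p j).1 * ((t * w₁ + n₁) / s) + (p j).2 * ((t * w₂ + n₂) / s))
          - ((p i).1 * ((t * w₁ + n₁) / s) + (p i).2 * ((t * w₂ + n₂) / s))|
          = |t * x i + y i| / s := by
        intro i
        have hxyabs : |t * x i + y i|
            = |v₁ i * (t * w₁ + n₁) + v₂ i * (t * w₂ + n₂)| := by
          have heq : t * x i + y i
              = σ i * (v₁ i * (t * w₁ + n₁) + v₂ i * (t * w₂ + n₂)) := by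
            simp only [hx, hy]; ring
          rw [heq, abs_mul, hσabs i, one_mul]
        have hAi : ((p j).1 * ((t * w₁ + n₁) / s) + (p j).2 * ((t * w₂ + n₂) / s))
            - ((p i).1 * ((t * w₁ + n₁) / s) + (p i).2 * ((t * w₂ + n₂) / s))
            = (v₁ i * (t * w₁ + n₁) + v₂ i * (t * w₂ + n₂)) / s := by
          simp only [hv₁, hv₂]
          field_simp
          ring
        rw [hAi, abs_div, abs_of_pos hs0, hxyabs]
      rw [hRHS]
      calc (∑ i, |((p j).1 * ((t * w₁ + n₁) / s) + (p j).2 * ((t * w₂ + n₂) / s))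
          - ((p i).1 * ((t * w₁ + n₁) / s) + (p i).2 * ((t * w₂ + n₂) / s))|)
          = ∑ i, |t * x i + y i| / s := Finset.sum_congr rfl fun i _ => hterm i
        _ = (∑ i, |t * x i + y i|) / s := by rw [Finset.sum_div]
        _ ≤ (∑ i, y i) / s := by
            gcongr
        _ ≤ ∑ i, y i := by
            apply div_le_self ?_ hs1
            exact Finset.sum_nonneg fun i _ => hy0 i
  · -- all x i = 0 : line with normal w passes through all points
    push_neg at hne
    obtain ⟨k, hkj⟩ : ∃ k : Fin m, k ≠ j := by
      have : 1 < Fintype.card (Fin m) := by simp; omega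
      exact Fintype.exists_ne_of_one_lt_card this j
    have hperp : ∀ i, v₁ i * w₁ + v₂ i * w₂ = 0 := by
      intro i
      have hσne : σ i ≠ 0 := by
        intro h
        have := hσabs i
        rw [h] at this
        simp at this
      have := hne i
      simp only [hx] at this
      rcases mul_eq_zero.mp this with h | h
      · exact absurd h hσne
      · exact h
    refine ⟨w₁, w₂, k, hw_unit, hkj, ?_, ?_⟩
    · have := hperp k
      simp only [hv₁, hv₂] at this
      linarith
    · have hzero : (∑ i, |((p j).1 * w₁ + (p j).2 * w₂) - ((p i).1 * w₁ + (p i).2 * w₂)|) = 0 := by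
        apply Finset.sum_eq_zero
        intro i _
        have := hperp i
        simp only [hv₁, hv₂] at this
        rw [abs_eq_zero]
        linarith
      rw [hzero]
      exact Finset.sum_nonneg fun i _ => abs_nonneg _

/-- Among all lines with minimal geometric L¹-distance to a set of
pairwise distinct points there is one passing through two of the given points. -/
theorem stmt_12 (m : ℕ) (hm : 2 ≤ m) (p : Fin m → ℝ × ℝ)
    (hp : Function.Injective p) :
    ∃ (c n₁ n₂ : ℝ) (j k : Fin m), n₁ ^ 2 + n₂ ^ 2 = 1 ∧ j ≠ k ∧
      (∀ c' n₁' n₂' : ℝ, n₁' ^ 2 + n₂' ^ 2 = 1 →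
        (∑ i, |c - ((p i).1 * n₁ + (p i).2 * n₂)|) ≤
          ∑ i, |c' - ((p i).1 * n₁' + (p i).2 * n₂')|) ∧
      (p j).1 * n₁ + (p j).2 * n₂ = c ∧ (p k).1 * n₁ + (p k).2 * n₂ = c := by
  classical
  -- squared distance between the two points of a pair
  set D : Fin m × Fin m → ℝ :=
    fun q => ((p q.2).1 - (p q.1).1) ^ 2 + ((p q.2).2 - (p q.1).2) ^ 2 with hD
  set N₁ : Fin m × Fin m → ℝ := fun q => -((p q.2).2 - (p q.1).2) / Real.sqrt (D q) with hN₁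
  set N₂ : Fin m × Fin m → ℝ := fun q => ((p q.2).1 - (p q.1).1) / Real.sqrt (D q) with hN₂
  set C : Fin m × Fin m → ℝ := fun q => (p q.1).1 * N₁ q + (p q.1).2 * N₂ q with hC
  set val : Fin m × Fin m → ℝ :=
    fun q => ∑ i, |C q - ((p i).1 * N₁ q + (p i).2 * N₂ q)| with hval
  have hDpos : ∀ q : Fin m × Fin m, q.1 ≠ q.2 → 0 < D q := by
    intro q hq
    have hpq : p q.1 ≠ p q.2 := fun h => hq (hp h)
    rcases lt_or_eq_of_le (by positivity : (0:ℝ) ≤ D q) with h | h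
    · exact h
    · exfalso
      apply hpq
      have h' : ((p q.2).1 - (p q.1).1) ^ 2 + ((p q.2).2 - (p q.1).2) ^ 2 = 0 := by
        simp only [hD] at h
        linarith
      have h1 : ((p q.2).1 - (p q.1).1) ^ 2 = 0 :=
        le_antisymm (by nlinarith [sq_nonneg ((p q.2).2 - (p q.1).2)]) (sq_nonneg _)
      have h2 : ((p q.2).2 - (p q.1).2) ^ 2 = 0 :=
        le_antisymm (by nlinarith [sq_nonneg ((p q.2).1 - (p q.1).1)]) (sq_nonneg _)
      have e1 : (p q.1).1 = (p q.2).1 := by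
        have := pow_eq_zero_iff (n := 2) (by norm_num) |>.mp h1
        linarith
      have e2 : (p q.1).2 = (p q.2).2 := by
        have := pow_eq_zero_iff (n := 2) (by norm_num) |>.mp h2
        linarith
      exact Prod.ext e1 e2
  have hunit : ∀ q : Fin m × Fin m, q.1 ≠ q.2 → (N₁ q) ^ 2 + (N₂ q) ^ 2 = 1 := by
    intro q hq
    have hD0 := hDpos q hq
    have hs : Real.sqrt (D q) ^ 2
        = ((p q.2).1 - (p q.1).1) ^ 2 + ((p q.2).2 - (p q.1).2) ^ 2 := by
      rw [Real.sq_sqrt hD0.le, hD]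
    have hX : ((p q.2).1 - (p q.1).1) ^ 2 + ((p q.2).2 - (p q.1).2) ^ 2 ≠ 0 :=
      ne_of_gt (by simpa [hD] using hD0)
    simp only [hN₁, hN₂]
    rw [div_pow, div_pow, ← add_div, hs, div_eq_one_iff_eq hX]
    ring
  have hthrough : ∀ q : Fin m × Fin m, q.1 ≠ q.2 →
      (p q.2).1 * N₁ q + (p q.2).2 * N₂ q = C q := by
    intro q hq
    have hs0 : Real.sqrt (D q) ≠ 0 := ne_of_gt (Real.sqrt_pos.mpr (hDpos q hq))
    simp only [hC, hN₁, hN₂]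
    field_simp
    ring
  have hne2 : ∃ j k : Fin m, j ≠ k := by
    refine ⟨⟨0, by omega⟩, ⟨1, by omega⟩, ?_⟩
    simp [Fin.ext_iff]
  obtain ⟨j₂, k₂, hjk₂⟩ := hne2
  have hoff : (Finset.univ.offDiag : Finset (Fin m × Fin m)).Nonempty :=
    ⟨(j₂, k₂), by simp [Finset.mem_offDiag, hjk₂]⟩
  obtain ⟨q₀, hq₀mem, hq₀min⟩ := Finset.exists_min_image _ val hoff
  have hq₀ : q₀.1 ≠ q₀.2 := (Finset.mem_offDiag.mp hq₀mem).2.2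
  refine ⟨C q₀, N₁ q₀, N₂ q₀, q₀.1, q₀.2, hunit q₀ hq₀, hq₀, ?_, rfl, hthrough q₀ hq₀⟩
  intro c' n₁' n₂' hn'
  -- Step 1: move the line to pass through some point p j₁
  obtain ⟨j₁, hj₁⟩ := median_step (by omega : 0 < m)
    (fun i => (p i).1 * n₁' + (p i).2 * n₂') c'
  -- Step 2: rotate around p j₁ to also pass through p k₁
  obtain ⟨u₁, u₂, k₁, hu_unit, hk₁j₁, hk₁eq, hrot⟩ := rotate_step hm p j₁ n₁' n₂' hn'
  -- the rotated line coincides (up to sign) with the canonical line of the pair (j₁, k₁)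
  set q₁ : Fin m × Fin m := (j₁, k₁) with hq₁
  have hq₁ne : q₁.1 ≠ q₁.2 := fun h => hk₁j₁ h.symm
  have hq₁mem : q₁ ∈ (Finset.univ.offDiag : Finset (Fin m × Fin m)) := by
    simp [Finset.mem_offDiag, hq₁ne]
  have hD₁ : D q₁ ≠ 0 := ne_of_gt (hDpos q₁ hq₁ne)
  have hperp : ((p k₁).1 - (p j₁).1) * u₁ + ((p k₁).2 - (p j₁).2) * u₂ = 0 := by
    linarith [hk₁eq]
  have habs : ∀ w₁ w₂ : ℝ, |w₁ * u₁ + w₂ * u₂| = |w₁ * N₁ q₁ + w₂ * N₂ q₁| := by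
    intro w₁ w₂
    have := perp_abs ((p k₁).1 - (p j₁).1) ((p k₁).2 - (p j₁).2) u₁ u₂
      (by simpa [hD] using hD₁) hu_unit hperp w₁ w₂
    simpa [hN₁, hN₂, hD] using this
  have hval₁ : (∑ i, |((p j₁).1 * u₁ + (p j₁).2 * u₂)
      - ((p i).1 * u₁ + (p i).2 * u₂)|) = val q₁ := by
    simp only [hval]
    refine Finset.sum_congr rfl fun i _ => ?_
    have h1 : ((p j₁).1 * u₁ + (p j₁).2 * u₂) - ((p i).1 * u₁ + (p i).2 * u₂)
        = ((p j₁).1 - (p i).1) * u₁ + ((p j₁).2 - (p i).2) * u₂ := by ring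
    have h2 : C q₁ - ((p i).1 * N₁ q₁ + (p i).2 * N₂ q₁)
        = ((p j₁).1 - (p i).1) * N₁ q₁ + ((p j₁).2 - (p i).2) * N₂ q₁ := by
      simp only [hC]; ring
    rw [h1, h2]
    exact habs _ _
  calc (∑ i, |C q₀ - ((p i).1 * N₁ q₀ + (p i).2 * N₂ q₀)|)
      = val q₀ := rfl
    _ ≤ val q₁ := hq₀min q₁ hq₁mem
    _ = ∑ i, |((p j₁).1 * u₁ + (p j₁).2 * u₂) - ((p i).1 * u₁ + (p i).2 * u₂)| := hval₁.symm
    _ ≤ ∑ i, |((p j₁).1 * n₁' + (p j₁).2 * n₂') - ((p i).1 * n₁' + (p i).2 * n₂')| := hrot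
    _ ≤ ∑ i, |c' - ((p i).1 * n₁' + (p i).2 * n₂')| := hj₁
end

section
/- Let m ≥ 2 and let p_j ∈ ℝ², j = 1,…,m, be pairwise distinct points. Fix an index k and define f(n) = Σ_{j≠k} |⟨p_j − p_k, n⟩| for n ∈ S¹. If n₀ ∈ S¹ satisfies ⟨p_j − p_k, n₀⟩ ≠ 0 for all j ≠ k, then min_{n ∈ S¹} f(n) < f(n₀); that is, a line through p_k containing no other point p_j is never optimal among lines through p_k. -/
open Real Filter Set Topology

private lemma stmt13_aux {P : ℝ → Prop} (A B : ℝ) (hA : 0 < A)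
    (hev : ∀ᶠ t in 𝓝 (0:ℝ), P t) :
    ∃ t : ℝ, P t ∧ Real.cos t * A + Real.sin t * B < A := by
  rcases le_or_gt 0 B with hB | hB
  · -- use negative t
    have h1 : ∀ᶠ t in 𝓝[<] (0:ℝ), t ∈ Set.Ioo (-1:ℝ) 0 := by
      have h2 : Set.Ioo (-1:ℝ) 1 ∈ 𝓝 (0:ℝ) := Ioo_mem_nhds (by norm_num) (by norm_num)
      filter_upwards [nhdsWithin_le_nhds h2, self_mem_nhdsWithin] with t ht ht'
      exact ⟨ht.1, ht'⟩
    obtain ⟨t, ht, hP⟩ := (h1.and (hev.filter_mono nhdsWithin_le_nhds)).exists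
    refine ⟨t, hP, ?_⟩
    have hpi := Real.pi_gt_three
    have hcos : Real.cos t < 1 := by
      have := Real.cos_lt_cos_of_nonneg_of_le_pi (x := 0) (y := -t) le_rfl
        (by linarith [ht.1]) (by linarith [ht.2])
      rw [Real.cos_neg] at this
      simpa using this
    have hsin : Real.sin t < 0 := Real.sin_neg_of_neg_of_neg_pi_lt ht.2 (by linarith [ht.1])
    nlinarith
  · -- use positive t
    have h1 : ∀ᶠ t in 𝓝[>] (0:ℝ), t ∈ Set.Ioo (0:ℝ) 1 := by
      have h2 : Set.Ioo (-1:ℝ) 1 ∈ 𝓝 (0:ℝ) := Ioo_mem_nhds (by norm_num) (by norm_num)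
      filter_upwards [nhdsWithin_le_nhds h2, self_mem_nhdsWithin] with t ht ht'
      exact ⟨ht', ht.2⟩
    obtain ⟨t, ht, hP⟩ := (h1.and (hev.filter_mono nhdsWithin_le_nhds)).exists
    refine ⟨t, hP, ?_⟩
    have hpi := Real.pi_gt_three
    have hcos : Real.cos t < 1 := by
      have := Real.cos_lt_cos_of_nonneg_of_le_pi (x := 0) (y := t) le_rfl
        (by linarith [ht.2]) ht.1
      simpa using this
    have hsin : 0 < Real.sin t := Real.sin_pos_of_pos_of_lt_pi ht.1 (by linarith [ht.2])
    nlinarith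

/-- A line through `p_k` containing no other point of the set is
never optimal among lines through `p_k` for the geometric L¹-distance. -/
theorem stmt_13 (m : ℕ) (hm : 2 ≤ m) (p : Fin m → ℝ × ℝ)
    (hp : Function.Injective p) (k : Fin m)
    (n₀ : ℝ × ℝ) (hn₀ : n₀.1 ^ 2 + n₀.2 ^ 2 = 1)
    (h : ∀ j : Fin m, j ≠ k →
      ((p j).1 - (p k).1) * n₀.1 + ((p j).2 - (p k).2) * n₀.2 ≠ 0) :
    ∃ n : ℝ × ℝ, n.1 ^ 2 + n.2 ^ 2 = 1 ∧
      (∑ j ∈ Finset.univ.erase k,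
        |((p j).1 - (p k).1) * n.1 + ((p j).2 - (p k).2) * n.2|) <
      ∑ j ∈ Finset.univ.erase k,
        |((p j).1 - (p k).1) * n₀.1 + ((p j).2 - (p k).2) * n₀.2| := by
  classical
  set S := Finset.univ.erase k with hS
  set c : Fin m → ℝ := fun j => ((p j).1 - (p k).1) * n₀.1 + ((p j).2 - (p k).2) * n₀.2 with hc
  set d : Fin m → ℝ := fun j => ((p j).2 - (p k).2) * n₀.1 - ((p j).1 - (p k).1) * n₀.2 with hd
  set ε : Fin m → ℝ := fun j => if 0 < c j then 1 else -1 with hε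
  have hcne : ∀ j ∈ S, c j ≠ 0 := fun j hj => h j (Finset.ne_of_mem_erase hj)
  have hεc : ∀ j ∈ S, ε j * c j = |c j| := by
    intro j hj
    rcases (hcne j hj).lt_or_gt with h1 | h1
    · simp [hε, not_lt.mpr h1.le, abs_of_neg h1]
    · simp [hε, h1, abs_of_pos h1]
  set A := ∑ j ∈ S, |c j| with hA
  set B := ∑ j ∈ S, ε j * d j with hB
  have hApos : 0 < A := by
    have : Nontrivial (Fin m) := Fin.nontrivial_iff_two_le.mpr hm
    obtain ⟨j, hj⟩ := exists_ne k
    have hjS : j ∈ S := Finset.mem_erase.mpr ⟨hj, Finset.mem_univ j⟩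
    have h1 : 0 < |c j| := abs_pos.mpr (hcne j hjS)
    have h2 : |c j| ≤ A := Finset.single_le_sum (fun i _ => abs_nonneg (c i)) hjS
    linarith
  have hev : ∀ᶠ t in 𝓝 (0:ℝ),
      (∑ j ∈ S, |Real.cos t * c j + Real.sin t * d j|) = Real.cos t * A + Real.sin t * B := by
    have hev1 : ∀ᶠ t in 𝓝 (0:ℝ), ∀ j ∈ S,
        |Real.cos t * c j + Real.sin t * d j| = ε j * (Real.cos t * c j + Real.sin t * d j) := by
      rw [eventually_all_finset]
      intro j hj
      have hcont : ContinuousAt (fun t => Real.cos t * c j + Real.sin t * d j) 0 := by fun_prop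
      have htend : Filter.Tendsto (fun t => Real.cos t * c j + Real.sin t * d j) (𝓝 0) (𝓝 (c j)) := by
        simpa using hcont.tendsto
      rcases (hcne j hj).lt_or_gt with h1 | h1
      · have h2 : ∀ᶠ t in 𝓝 (0:ℝ), Real.cos t * c j + Real.sin t * d j < 0 :=
          htend.eventually (eventually_lt_nhds h1)
        filter_upwards [h2] with t ht
        rw [abs_of_neg ht]
        simp [hε, not_lt.mpr h1.le]
      · have h2 : ∀ᶠ t in 𝓝 (0:ℝ), 0 < Real.cos t * c j + Real.sin t * d j :=
          htend.eventually (eventually_gt_nhds h1)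
        filter_upwards [h2] with t ht
        rw [abs_of_pos ht]
        simp [hε, h1]
    filter_upwards [hev1] with t ht
    rw [Finset.sum_congr rfl ht]
    have : ∀ j ∈ S, ε j * (Real.cos t * c j + Real.sin t * d j)
        = Real.cos t * (ε j * c j) + Real.sin t * (ε j * d j) := by intro j _; ring
    rw [Finset.sum_congr rfl this, Finset.sum_add_distrib, ← Finset.mul_sum, ← Finset.mul_sum,
      Finset.sum_congr rfl hεc]
  obtain ⟨t, hPt, hlt⟩ := stmt13_aux A B hApos hev
  refine ⟨(Real.cos t * n₀.1 - Real.sin t * n₀.2, Real.sin t * n₀.1 + Real.cos t * n₀.2), ?_, ?_⟩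
  · have := Real.sin_sq_add_cos_sq t
    simp only
    nlinarith [hn₀]
  · have heq : ∀ j ∈ S, |((p j).1 - (p k).1) * (Real.cos t * n₀.1 - Real.sin t * n₀.2)
        + ((p j).2 - (p k).2) * (Real.sin t * n₀.1 + Real.cos t * n₀.2)|
        = |Real.cos t * c j + Real.sin t * d j| := by
      intro j _
      congr 1
      simp only [hc, hd]
      ring
    calc ∑ j ∈ S, |((p j).1 - (p k).1) * (Real.cos t * n₀.1 - Real.sin t * n₀.2)
          + ((p j).2 - (p k).2) * (Real.sin t * n₀.1 + Real.cos t * n₀.2)|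
        = ∑ j ∈ S, |Real.cos t * c j + Real.sin t * d j| := Finset.sum_congr rfl heq
      _ = Real.cos t * A + Real.sin t * B := hPt
      _ < A := hlt
end

section
/- Let m ≥ 2 and let p_j = (x_j, y_j) ∈ ℝ², j = 1,…,m. If (a₀, b₀) ∈ ℝ² globally minimizes f(a,b) = max_{j=1,…,m} |y_j − a x_j − b|, then there exist indices k ≠ l such that f(a₀,b₀) = (y_l − a₀ x_l) − b₀ = b₀ − (y_k − a₀ x_k), and the midpoint (p_k + p_l)/2 lies on the line y = a₀ x + b₀, i.e. (y_k + y_l)/2 = a₀ (x_k + x_l)/2 + b₀. -/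
/-- If `(a₀,b₀)` globally minimizes the algebraic L∞-distance
`f(a,b) = max_j |y_j - a x_j - b|`, then there are indices `k ≠ l` with
`f(a₀,b₀) = (y_l - a₀ x_l) - b₀ = b₀ - (y_k - a₀ x_k)` and the midpoint
`(p_k + p_l)/2` lies on the line `y = a₀ x + b₀`. -/
theorem stmt_15 (m : ℕ) (hm : 2 ≤ m) (x y : Fin m → ℝ) (a₀ b₀ : ℝ)
    (hmin : ∀ a b : ℝ,
      (Finset.univ.sup' ⟨⟨0, by omega⟩, Finset.mem_univ _⟩
          fun j => |y j - a₀ * x j - b₀|) ≤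
        Finset.univ.sup' ⟨⟨0, by omega⟩, Finset.mem_univ _⟩
          fun j => |y j - a * x j - b|) :
    ∃ k l : Fin m, k ≠ l ∧
      (Finset.univ.sup' ⟨⟨0, by omega⟩, Finset.mem_univ _⟩
          fun j => |y j - a₀ * x j - b₀|) = (y l - a₀ * x l) - b₀ ∧
      (Finset.univ.sup' ⟨⟨0, by omega⟩, Finset.mem_univ _⟩
          fun j => |y j - a₀ * x j - b₀|) = b₀ - (y k - a₀ * x k) ∧
      (y k + y l) / 2 = a₀ * ((x k + x l) / 2) + b₀ := by
  set ne : (Finset.univ : Finset (Fin m)).Nonempty :=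
    ⟨⟨0, by omega⟩, Finset.mem_univ _⟩ with hne
  set r : Fin m → ℝ := fun j => y j - a₀ * x j - b₀ with hr
  set F : ℝ := Finset.univ.sup' ne fun j => |r j| with hF
  set M : ℝ := Finset.univ.sup' ne r with hM
  set μ : ℝ := Finset.univ.inf' ne r with hμ
  have hjF : ∀ j, |r j| ≤ F := fun j => Finset.le_sup' (fun i => |r i|) (Finset.mem_univ j)
  have hjM : ∀ j, r j ≤ M := fun j => Finset.le_sup' r (Finset.mem_univ j)
  have hjμ : ∀ j, μ ≤ r j := fun j => Finset.inf'_le r (Finset.mem_univ j)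
  have hMF : M ≤ F := by
    apply Finset.sup'_le; intro j _; exact le_trans (le_abs_self _) (hjF j)
  have hμF : -F ≤ μ := by
    apply Finset.le_inf'; intro j _; exact le_trans (neg_le_neg (hjF j)) (neg_abs_le _)
  have hFmax : F ≤ max M (-μ) := by
    apply Finset.sup'_le; intro j _
    rcases abs_cases (r j) with ⟨h, _⟩ | ⟨h, _⟩
    · rw [h]; exact le_max_of_le_left (hjM j)
    · rw [h]; exact le_max_of_le_right (by linarith [hjμ j])
  have hkey : F ≤ (M - μ) / 2 := by
    have := hmin a₀ (b₀ + (M + μ) / 2)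
    refine le_trans this ?_
    apply Finset.sup'_le; intro j _
    have h1 := hjM j; have h2 := hjμ j
    rw [abs_le]; constructor <;> simp only [hr] at h1 h2 ⊢ <;> linarith
  have hMeq : M = F := by
    rcases le_max_iff.mp hFmax with h | h
    · linarith
    · linarith
  have hμeq : μ = -F := by
    rcases le_max_iff.mp hFmax with h | h
    · linarith
    · linarith
  obtain ⟨l, _, hl⟩ := Finset.exists_mem_eq_sup' ne r
  obtain ⟨k, _, hk⟩ := Finset.exists_mem_eq_inf' ne r
  have hrl : r l = F := by rw [← hMeq]; exact (hM.trans hl).symm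
  have hrk : r k = -F := by rw [← hμeq]; exact (hμ.trans hk).symm
  rcases eq_or_lt_of_le (abs_nonneg (r l) |>.trans (hjF l)) with hF0 | hFpos
  · -- F = 0 : all residuals vanish; pick two distinct indices
    have hall : ∀ j, r j = 0 := fun j => by
      have := hjF j; rw [← hF0] at this; exact abs_nonpos_iff.mp this
    refine ⟨⟨0, by omega⟩, ⟨1, by omega⟩, by simp [Fin.ext_iff], ?_, ?_, ?_⟩
    · have := hall ⟨1, by omega⟩; simp only [hr] at this; linarith [hF0.symm]
    · have := hall ⟨0, by omega⟩; simp only [hr] at this; linarith [hF0.symm]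
    · have h1 := hall ⟨0, by omega⟩; have h2 := hall ⟨1, by omega⟩
      simp only [hr] at h1 h2; linarith
  · refine ⟨k, l, ?_, ?_, ?_, ?_⟩
    · intro h; rw [h, hrl] at hrk; linarith
    · simp only [hr] at hrl; linarith
    · simp only [hr] at hrk; linarith
    · simp only [hr] at hrl hrk; linarith
end
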